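/- Let e = gcd(d, q−1) ≥ 2. For any positive integers k and h and any δ ∈ Γ_e \ {1}, the degree of gcd(G*_{k+h,δ}, ∏_{γ ∈ Γ_e \ {1}} G_{k,γ}) in F_q[X] is at most d^h − 1. -/

import Mathlib

open Polynomial in
/-- The iterates `F_0(X) = X`, `F_k(X) = F_{k-1}(X)^d + X`. -/
noncomputable def Fiter (F : Type*) [Field F] (d : ℕ) : ℕ → Polynomial F
  | 0 => Polynomial.X
  | (k + 1) => (Fiter F d k) ^ d + Polynomial.X

/-- The polynomials `G_{k,γ}(X) = γ·F_k(X) − X`. -/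
noncomputable def Gpoly (F : Type*) [Field F] (d : ℕ) (γ : F) (k : ℕ) : Polynomial F :=
  Polynomial.C γ * Fiter F d k - Polynomial.X

/-!
Let `P` be the gcd. Since `G*_{k+h,δ}` has constant term `δ - 1 ≠ 0`, `P` is prime to `X`, so
it suffices to show `P ∣ G_{h,δ} = X·G*_{h,δ}`, a polynomial of degree at most `d^h`. As `Γ_e`
consists of `e` distinct `e`-th roots of unity, `∏_{γ ≠ 1} (γF_k - X)` divides `X^e - F_k^e`, hence
`X^d - F_k^d` (as `e ∣ d`). The recursion gives `F_{j+1} - F_{k+j+1} = F_j^d - F_{k+j}^d`, so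
`X^d - F_k^d = F_1 - F_{k+1}` divides every `F_h - F_{k+h}`, and hence `P` divides
`G_{h,δ} - G_{k+h,δ} = δ(F_h - F_{k+h})` as well as `G_{k+h,δ}`.
-/

open Polynomial

theorem FiniteField.exists_isPrimitiveRoot_of_dvd_card_sub_one {K : Type*} [Field K] [Fintype K]
    {n : ℕ} (hn : n ∣ Fintype.card K - 1) : ∃ ζ : K, IsPrimitiveRoot ζ n := by
  classical
  obtain ⟨m, hm⟩ := hn
  obtain ⟨g, hg⟩ := IsCyclic.exists_ofOrder_eq_natCard (α := Kˣ)
  have hg' : IsPrimitiveRoot (g : K) (Fintype.card K - 1) := by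
    rw [IsPrimitiveRoot.coe_units_iff, IsPrimitiveRoot.iff_orderOf, hg, Nat.card_eq_fintype_card,
      Fintype.card_units]
  exact ⟨_, hg'.pow (Nat.sub_pos_of_lt Fintype.one_lt_card) (hm.trans (mul_comm n m))⟩

theorem IsPrimitiveRoot.prod_sub_mul_dvd_pow_sub_pow {R : Type*} [CommRing R] [IsDomain R]
    {ζ : R} {n : ℕ} (hζ : IsPrimitiveRoot ζ n) (hn : 0 < n) {s : Finset R}
    (hs : ∀ γ ∈ s, γ ^ n = 1) (x y : R) : ∏ γ ∈ s, (x - γ * y) ∣ x ^ n - y ^ n := by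
  rw [hζ.pow_sub_pow_eq_prod_sub_mul x y hn]
  exact Finset.prod_dvd_prod_of_subset _ _ _ fun γ hγ =>
    (Polynomial.mem_nthRootsFinset hn _).2 (hs γ hγ)

section

variable {F : Type*} [Field F] {d : ℕ}

theorem Fiter_succ (k : ℕ) : Fiter F d (k + 1) = Fiter F d k ^ d + X := rfl

theorem natDegree_Fiter_le (hd : 0 < d) (k : ℕ) : (Fiter F d k).natDegree ≤ d ^ k := by
  induction k with
  | zero => simp [Fiter]
  | succ k ih =>
    rw [Fiter_succ]
    refine (natDegree_add_le _ _).trans (max_le ?_ (natDegree_X_le.trans (Nat.one_le_pow _ _ hd)))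
    rw [pow_succ']
    exact natDegree_pow_le.trans (Nat.mul_le_mul_left d ih)

theorem X_dvd_Fiter (hd : d ≠ 0) (k : ℕ) : (X : F[X]) ∣ Fiter F d k := by
  induction k with
  | zero => exact dvd_rfl
  | succ k ih => exact dvd_add (dvd_pow ih hd) dvd_rfl

theorem coeff_one_Fiter (hd : 2 ≤ d) (k : ℕ) : (Fiter F d k).coeff 1 = 1 := by
  induction k with
  | zero => simp [Fiter]
  | succ k _ =>
    obtain ⟨r, hr⟩ : (X : F[X]) ^ 2 ∣ Fiter F d k ^ d :=
      (pow_dvd_pow X hd).trans (pow_dvd_pow_of_dvd (X_dvd_Fiter (by omega) k) d)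
    rw [Fiter_succ, coeff_add, hr, coeff_X_pow_mul', if_neg (by omega), coeff_X_one, zero_add]

theorem X_pow_sub_Fiter_pow_dvd (k : ℕ) {j : ℕ} (hj : 1 ≤ j) :
    X ^ d - Fiter F d k ^ d ∣ Fiter F d j - Fiter F d (k + j) := by
  induction j, hj using Nat.le_induction with
  | base => rw [Fiter_succ, Fiter_succ, add_sub_add_right_eq_sub]; rfl
  | succ j _ ih =>
    rw [← add_assoc, Fiter_succ, Fiter_succ, add_sub_add_right_eq_sub]
    exact ih.trans (sub_dvd_pow_sub_pow _ _ d)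

theorem natDegree_Gpoly_le (hd : 0 < d) (γ : F) (k : ℕ) : (Gpoly F d γ k).natDegree ≤ d ^ k :=
  (natDegree_sub_le _ _).trans <| max_le
    (natDegree_C_mul_le _ _ |>.trans (natDegree_Fiter_le hd k))
    (natDegree_X_le.trans (Nat.one_le_pow _ _ hd))

theorem X_mul_Gpoly_div_X (hd : d ≠ 0) (γ : F) (k : ℕ) : X * (Gpoly F d γ k / X) = Gpoly F d γ k :=
  EuclideanDomain.mul_div_cancel' X_ne_zero <|
    dvd_sub (dvd_mul_of_dvd_right (X_dvd_Fiter hd k) _) dvd_rfl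

theorem coeff_zero_Gpoly_div_X (hd : 2 ≤ d) (γ : F) (k : ℕ) :
    (Gpoly F d γ k / X).coeff 0 = γ - 1 := by
  rw [← coeff_X_mul, X_mul_Gpoly_div_X (by omega), Gpoly, coeff_sub, coeff_C_mul,
    coeff_one_Fiter hd, coeff_X_one, mul_one]

theorem not_X_dvd_Gpoly_div_X (hd : 2 ≤ d) {γ : F} (hγ : γ ≠ 1) (k : ℕ) :
    ¬X ∣ Gpoly F d γ k / X := by
  rw [X_dvd_iff, coeff_zero_Gpoly_div_X hd]
  exact sub_ne_zero.2 hγ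

theorem natDegree_Gpoly_div_X_le (hd : 0 < d) (γ : F) (k : ℕ) :
    (Gpoly F d γ k / X).natDegree ≤ d ^ k - 1 := by
  rcases eq_or_ne (Gpoly F d γ k / X) 0 with hQ | hQ
  · simp [hQ]
  · have := natDegree_Gpoly_le hd γ k
    rw [← X_mul_Gpoly_div_X hd.ne', natDegree_X_mul hQ] at this
    omega

theorem prod_Gpoly_dvd_X_pow_sub_Fiter_pow {ζ : F} {e : ℕ} (hζ : IsPrimitiveRoot ζ e) (he : 0 < e)
    {s : Finset F} (hs : ∀ γ ∈ s, γ ^ e = 1) (k : ℕ) :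
    ∏ γ ∈ s, Gpoly F d γ k ∣ X ^ e - Fiter F d k ^ e := by
  classical
  have key := (hζ.map_of_injective C_injective).prod_sub_mul_dvd_pow_sub_pow he (s := s.image C)
    (Finset.forall_mem_image.2 fun γ hγ => by rw [← map_pow, hs γ hγ, map_one]) X (Fiter F d k)
  rw [Finset.prod_image C_injective.injOn] at key
  have hneg : ∏ γ ∈ s, Gpoly F d γ k = (-1) ^ s.card * ∏ γ ∈ s, (X - C γ * Fiter F d k) := by
    rw [← Finset.prod_neg]; simp only [Gpoly, neg_sub]
  rw [hneg]
  exact (isUnit_neg_one.pow _).mul_left_dvd.2 key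

theorem prod_Gpoly_dvd_Gpoly_sub {ζ : F} {e : ℕ} (hζ : IsPrimitiveRoot ζ e) (he : 0 < e)
    (hed : e ∣ d) {s : Finset F} (hs : ∀ γ ∈ s, γ ^ e = 1) (k : ℕ) {h : ℕ} (hh : 1 ≤ h) (δ : F) :
    ∏ γ ∈ s, Gpoly F d γ k ∣ Gpoly F d δ h - Gpoly F d δ (k + h) := by
  obtain ⟨m, hm⟩ := hed
  have hdiff : Gpoly F d δ h - Gpoly F d δ (k + h) = C δ * (Fiter F d h - Fiter F d (k + h)) := by
    simp only [Gpoly]; ring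
  rw [hdiff]
  refine (prod_Gpoly_dvd_X_pow_sub_Fiter_pow hζ he hs k).trans <| Dvd.dvd.mul_left ?_ _
  refine (sub_dvd_pow_sub_pow _ _ m).trans ?_
  rw [← pow_mul, ← pow_mul, ← hm]
  exact X_pow_sub_Fiter_pow_dvd k hh

end

theorem stmt18_general (F : Type*) [Field F] [Fintype F] [DecidableEq F]
    (d : ℕ) (hd : 2 ≤ d)
    (e : ℕ) (he : e = Nat.gcd d (Fintype.card F - 1))
    (k h : ℕ) (hh : 1 ≤ h)
    (δ : F) (hδ1 : δ ≠ 1) :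
    (EuclideanDomain.gcd (Gpoly F d δ (k + h) / Polynomial.X)
        (∏ γ ∈ Finset.univ.filter (fun γ : F => γ ^ e = 1 ∧ γ ≠ 1),
          Gpoly F d γ k)).natDegree ≤ d ^ h - 1 := by
  have he0 : 0 < e := he ▸ Nat.gcd_pos_of_pos_left _ (by omega)
  obtain ⟨ζ, hζ⟩ := FiniteField.exists_isPrimitiveRoot_of_dvd_card_sub_one (K := F)
    (he ▸ Nat.gcd_dvd_right _ _)
  set P := EuclideanDomain.gcd (Gpoly F d δ (k + h) / X)
    (∏ γ ∈ Finset.univ.filter (fun γ : F => γ ^ e = 1 ∧ γ ≠ 1), Gpoly F d γ k)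
  have hPA : P ∣ Gpoly F d δ (k + h) / X := EuclideanDomain.gcd_dvd_left _ _
  have hPG : P ∣ Gpoly F d δ (k + h) := by
    rw [← X_mul_Gpoly_div_X (by omega)]; exact hPA.mul_left X
  have hPdiff : P ∣ Gpoly F d δ h - Gpoly F d δ (k + h) :=
    (EuclideanDomain.gcd_dvd_right _ _).trans <| prod_Gpoly_dvd_Gpoly_sub hζ he0
      (he ▸ Nat.gcd_dvd_left _ _) (fun γ hγ => (Finset.mem_filter.1 hγ).2.1) k hh δ
  have hXP : IsCoprime P X :=
    (prime_X.coprime_iff_not_dvd.2 fun hX => not_X_dvd_Gpoly_div_X hd hδ1 _ (hX.trans hPA)).symm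
  have hPQ : P ∣ Gpoly F d δ h / X := by
    refine hXP.dvd_of_dvd_mul_left ?_
    rw [X_mul_Gpoly_div_X (by omega)]
    exact (dvd_sub_left hPG).1 hPdiff
  have hQ : Gpoly F d δ h / X ≠ 0 := fun h0 => not_X_dvd_Gpoly_div_X hd hδ1 h (h0 ▸ dvd_zero X)
  exact (natDegree_le_of_dvd hPQ hQ).trans (natDegree_Gpoly_div_X_le (by omega) δ h)

theorem stmt18 (F : Type*) [Field F] [Fintype F] [DecidableEq F]
    (d : ℕ) (hd : 2 ≤ d)
    (e : ℕ) (he : e = Nat.gcd d (Fintype.card F - 1)) (he2 : 2 ≤ e)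
    (k h : ℕ) (hk : 1 ≤ k) (hh : 1 ≤ h)
    (δ : F) (hδ : δ ^ e = 1) (hδ1 : δ ≠ 1) :
    (EuclideanDomain.gcd (Gpoly F d δ (k + h) / Polynomial.X)
        (∏ γ ∈ Finset.univ.filter (fun γ : F => γ ^ e = 1 ∧ γ ≠ 1),
          Gpoly F d γ k)).natDegree ≤ d ^ h - 1 :=
  stmt18_general F d hd e he k h hh δ hδ1
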